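/- arXiv:2210.10686 — 2 statements merged into one kernel-verified Lean document; each statement's English description precedes it below -/
import Mathlib

section
/- Let f be a holomorphic function on the upper half-plane, γ = [[a,b],[c,d]] ∈ SL₂(ℝ), k an integer, and m ≥ 0. Then ((D^m f)|_{k+2m} γ)(τ) = Σ_{r=0}^m C(m,r)·(k+r)_{m-r}·((1/(2πi))·c/(cτ+d))^{m-r}·(D^r(f|_k γ))(τ). -/
open Complex Finset

noncomputable section

/-- The normalized derivative `D = (2πi)⁻¹ d/dτ`. -/
def Dop (f : ℂ → ℂ) : ℂ → ℂ := fun τ => (2 * ↑Real.pi * I)⁻¹ * deriv f τ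

/-- Rising factorial `x (x+1) ⋯ (x+n-1)` for complex `x`. -/
def risingC (x : ℂ) (n : ℕ) : ℂ := ∏ i ∈ Finset.range n, (x + i)

/-- Weight `k` slash action of `γ = [[a,b],[c,d]]` on functions of the upper half-plane. -/
def slash (k : ℤ) (a b c d : ℝ) (f : ℂ → ℂ) : ℂ → ℂ :=
  fun τ => ((c : ℂ) * τ + (d : ℂ)) ^ (-k) * f (((a : ℂ) * τ + (b : ℂ)) / ((c : ℂ) * τ + (d : ℂ)))

/-! The weight-`w` slash operator intertwines `D` with `D + w X`, where
`X = D log (cτ + d) = (2πi)⁻¹ c / (cτ + d)`: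
`(D g)|_{w+2} γ = D (g|_w γ) + w X (g|_w γ)`. Hence `s_m = (D^m f)|_{k+2m} γ` satisfies
`s_{m+1} = D s_m + (k + 2m) X s_m`. Since `D X = -X²`, applying `D` to a term `X^n G` only
produces terms of the same shape, and by induction any sequence obeying this recurrence equals
`∑ C(m,r) (k+r)_{m-r} X^{m-r} D^r s_0`, the coefficients obeying a Pascal-type recurrence. -/

open UpperHalfPlane (upperHalfPlaneSet isOpen_upperHalfPlaneSet)
open scoped Topology

theorem Filter.EventuallyEq.Dop_eq {F G : ℂ → ℂ} {z : ℂ} (h : F =ᶠ[𝓝 z] G) :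
    Dop F z = Dop G z := by
  rw [Dop, Dop, h.deriv_eq]

theorem Dop_const_mul (A : ℂ) (F : ℂ → ℂ) (z : ℂ) :
    Dop (fun w => A * F w) z = A * Dop F z := by
  simp only [Dop, deriv_const_mul_field']
  ring

theorem Dop_fun_sum {ι : Type*} (s : Finset ι) {F : ι → ℂ → ℂ} {z : ℂ}
    (h : ∀ i ∈ s, DifferentiableAt ℂ (F i) z) :
    Dop (fun w => ∑ i ∈ s, F i w) z = ∑ i ∈ s, Dop (F i) z := by
  simp only [Dop, deriv_fun_sum h, mul_sum]

theorem Dop_pow_mul_of_Dop_eq_neg_sq {X G : ℂ → ℂ} {z : ℂ} (hX : DifferentiableAt ℂ X z)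
    (hDX : Dop X z = -X z ^ 2) (hG : DifferentiableAt ℂ G z) (n : ℕ) :
    Dop (fun w => X w ^ n * G w) z = -n * X z ^ (n + 1) * G z + X z ^ n * Dop G z := by
  have h := ((hX.hasDerivAt.fun_pow n).fun_mul hG.hasDerivAt).deriv
  simp only [Dop] at hDX ⊢
  rw [h]
  cases n with
  | zero => simp
  | succ n =>
    simp only [Nat.add_sub_cancel, Nat.cast_succ]
    linear_combination ((n + 1) * X z ^ n * G z) * hDX

theorem differentiableOn_Dop {U : Set ℂ} (hU : IsOpen U) {g : ℂ → ℂ}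
    (hg : DifferentiableOn ℂ g U) : DifferentiableOn ℂ (Dop g) U :=
  (hg.deriv hU).const_mul _

theorem differentiableOn_iterate_Dop {U : Set ℂ} (hU : IsOpen U) {g : ℂ → ℂ}
    (hg : DifferentiableOn ℂ g U) (r : ℕ) : DifferentiableOn ℂ (Dop^[r] g) U := by
  induction r with
  | zero => exact hg
  | succ r ih => rw [Function.iterate_succ_apply']; exact differentiableOn_Dop hU ih

theorem risingC_succ (x : ℂ) (n : ℕ) : risingC x (n + 1) = risingC x n * (x + n) :=
  prod_range_succ _ _

theorem risingC_succ' (x : ℂ) (n : ℕ) : risingC x (n + 1) = x * risingC (x + 1) n := by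
  simp only [risingC, prod_range_succ', Nat.cast_zero, add_zero, Nat.cast_succ, add_assoc,
    add_comm (1 : ℂ), mul_comm]

def slashDopCoeff (K : ℂ) (m r : ℕ) : ℂ := m.choose r * risingC (K + r) (m - r)

theorem slashDopCoeff_of_lt (K : ℂ) {m r : ℕ} (h : m < r) : slashDopCoeff K m r = 0 := by
  simp [slashDopCoeff, Nat.choose_eq_zero_of_lt h]

theorem slashDopCoeff_succ_zero (K : ℂ) (m : ℕ) :
    slashDopCoeff K (m + 1) 0 = slashDopCoeff K m 0 * (K + m) := by
  simp [slashDopCoeff, risingC_succ]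

theorem slashDopCoeff_succ_succ (K : ℂ) {m r : ℕ} (hr : r ≤ m) :
    slashDopCoeff K (m + 1) (r + 1) =
      slashDopCoeff K m (r + 1) * (K + m + r + 1) + slashDopCoeff K m r := by
  obtain ⟨n, rfl⟩ := Nat.exists_eq_add_of_le hr
  cases n with
  | zero => simp [slashDopCoeff, risingC, Nat.choose_succ_self]
  | succ n =>
    have hshift : risingC (K + r) (n + 1) = (K + r) * risingC (K + (r + 1 : ℕ)) n := by
      rw [risingC_succ', Nat.cast_succ, add_assoc]
    have habsorb :
        ((r + (n + 1)).choose (r + 1) : ℂ) * (r + 1) = (r + (n + 1)).choose r * (n + 1) := by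
      have h := Nat.choose_succ_right_eq (r + (n + 1)) r
      rw [Nat.add_sub_cancel_left] at h
      exact_mod_cast h
    simp only [slashDopCoeff]
    rw [show r + (n + 1) + 1 - (r + 1) = n + 1 by omega, show r + (n + 1) - (r + 1) = n by omega,
      show r + (n + 1) - r = n + 1 by omega, risingC_succ (K + (r + 1 : ℕ)) n, hshift,
      Nat.choose_succ_succ']
    push_cast
    linear_combination -risingC (K + (r + 1)) n * habsorb

theorem sum_slashDopCoeff_succ (K x : ℂ) (y : ℕ → ℂ) (m : ℕ) :
    ∑ r ∈ range (m + 2), slashDopCoeff K (m + 1) r * x ^ (m + 1 - r) * y r =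
      ∑ r ∈ range (m + 1), slashDopCoeff K m r * (K + m + r) * x ^ (m + 1 - r) * y r +
      ∑ r ∈ range (m + 1), slashDopCoeff K m r * x ^ (m - r) * y (r + 1) := by
  have hextend :
      ∑ r ∈ range (m + 1), slashDopCoeff K m r * (K + m + r) * x ^ (m + 1 - r) * y r =
      ∑ r ∈ range (m + 2), slashDopCoeff K m r * (K + m + r) * x ^ (m + 1 - r) * y r := by
    rw [sum_range_succ _ (m + 1), slashDopCoeff_of_lt K (Nat.lt_succ_self m)]
    simp
  rw [hextend, sum_range_succ', sum_range_succ' _ (m + 1), add_right_comm, ← sum_add_distrib]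
  congr 1
  · refine sum_congr rfl fun r hr => ?_
    rw [slashDopCoeff_succ_succ K (Nat.lt_succ_iff.mp (mem_range.mp hr)), Nat.add_sub_add_right]
    push_cast
    ring
  · rw [slashDopCoeff_succ_zero]
    simp

theorem eq_sum_slashDopCoeff_of_recurrence {U : Set ℂ} (hU : IsOpen U) {X : ℂ → ℂ}
    (hX : DifferentiableOn ℂ X U) (hDX : ∀ z ∈ U, Dop X z = -X z ^ 2) (K : ℂ)
    {s : ℕ → ℂ → ℂ} (hs₀ : DifferentiableOn ℂ (s 0) U)
    (hs : ∀ m, ∀ z ∈ U, s (m + 1) z = Dop (s m) z + (K + 2 * m) * X z * s m z)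
    (m : ℕ) {z : ℂ} (hz : z ∈ U) :
    s m z = ∑ r ∈ range (m + 1), slashDopCoeff K m r * X z ^ (m - r) * Dop^[r] (s 0) z := by
  induction m generalizing z with
  | zero => simp [slashDopCoeff, risingC]
  | succ m ih =>
    have hUz := hU.mem_nhds hz
    have hXz := hX.differentiableAt hUz
    have hG (r : ℕ) : DifferentiableAt ℂ (Dop^[r] (s 0)) z :=
      (differentiableOn_iterate_Dop hU hs₀ r).differentiableAt hUz
    have hDs : Dop (s m) z = ∑ r ∈ range (m + 1), slashDopCoeff K m r *
        (-((m - r : ℕ) : ℂ) * X z ^ (m - r + 1) * Dop^[r] (s 0) z +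
          X z ^ (m - r) * Dop^[r + 1] (s 0) z) := by
      have hev : s m =ᶠ[𝓝 z] fun w => ∑ r ∈ range (m + 1),
          slashDopCoeff K m r * (X w ^ (m - r) * Dop^[r] (s 0) w) :=
        Filter.eventually_of_mem hUz fun w hw => by simp only [ih hw, mul_assoc]
      rw [hev.Dop_eq, Dop_fun_sum]
      · refine sum_congr rfl fun r _ => ?_
        rw [Dop_const_mul, Dop_pow_mul_of_Dop_eq_neg_sq hXz (hDX z hz) (hG r),
          Function.iterate_succ_apply']
      · exact fun r _ => ((hXz.pow _).mul (hG r)).const_mul _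
    rw [hs m z hz, hDs, ih hz, sum_slashDopCoeff_succ, mul_sum, ← sum_add_distrib,
      ← sum_add_distrib]
    refine sum_congr rfl fun r hr => ?_
    have hrm : r ≤ m := Nat.lt_succ_iff.mp (mem_range.mp hr)
    rw [Nat.sub_add_comm hrm, Nat.cast_sub hrm]
    ring

section Moebius

variable {a b c d : ℝ} {τ : ℂ}

theorem im_moebius (a b c d : ℝ) (τ : ℂ) :
    (((a : ℂ) * τ + b) / ((c : ℂ) * τ + d)).im =
      (a * d - b * c) * τ.im / normSq ((c : ℂ) * τ + d) := by
  rw [div_im, ← sub_div]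
  congr 1
  simp only [add_im, add_re, mul_im, mul_re, ofReal_re, ofReal_im]
  ring

theorem denom_ne_zero (hdet : a * d - b * c ≠ 0) (hτ : τ.im ≠ 0) :
    (c : ℂ) * τ + d ≠ 0 := by
  intro h
  have hc : c = 0 := by
    simpa [hτ] using congrArg im h
  have hd : d = 0 := by
    simpa [hc] using congrArg re h
  exact hdet (by simp [hc, hd])

theorem moebius_im_pos (hdet : 0 < a * d - b * c) (hτ : 0 < τ.im) :
    0 < (((a : ℂ) * τ + b) / ((c : ℂ) * τ + d)).im := by
  rw [im_moebius]
  have := normSq_pos.2 (denom_ne_zero hdet.ne' hτ.ne')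
  positivity

theorem hasDerivAt_moebius (hne : (c : ℂ) * τ + d ≠ 0) :
    HasDerivAt (fun z : ℂ => ((a : ℂ) * z + b) / ((c : ℂ) * z + d))
      (((a * d - b * c : ℝ) : ℂ) / ((c : ℂ) * τ + d) ^ 2) τ := by
  have hlin (p q : ℝ) : HasDerivAt (fun z : ℂ => (p : ℂ) * z + q) p τ := by
    simpa using ((hasDerivAt_id τ).const_mul (p : ℂ)).add_const (q : ℂ)
  refine ((hlin a b).fun_div (hlin c d) hne).congr_deriv ?_
  push_cast
  ring

theorem hasDerivAt_slash {g : ℂ → ℂ} (w : ℤ) (hne : (c : ℂ) * τ + d ≠ 0)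
    (hg : DifferentiableAt ℂ g (((a : ℂ) * τ + b) / ((c : ℂ) * τ + d))) :
    HasDerivAt (slash w a b c d g)
      (((c : ℂ) * τ + d) ^ (-w) *
        (-w * c / ((c : ℂ) * τ + d) * g (((a : ℂ) * τ + b) / ((c : ℂ) * τ + d)) +
          (a * d - b * c : ℝ) / ((c : ℂ) * τ + d) ^ 2 *
            deriv g (((a : ℂ) * τ + b) / ((c : ℂ) * τ + d)))) τ := by
  have hden : HasDerivAt (fun z : ℂ => ((c : ℂ) * z + d) ^ (-w))
      (-w * ((c : ℂ) * τ + d) ^ (-w - 1) * c) τ := by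
    have := (hasDerivAt_zpow (-w) _ (Or.inl hne)).comp τ
      (((hasDerivAt_id τ).const_mul (c : ℂ)).add_const (d : ℂ))
    simpa [Function.comp_def] using this
  refine (hden.mul (hg.hasDerivAt.comp τ (hasDerivAt_moebius hne))).congr_deriv ?_
  rw [zpow_sub_one₀ hne]
  simp only [Function.comp_apply]
  ring

theorem differentiableOn_slash {g : ℂ → ℂ} (hdet : 0 < a * d - b * c)
    (hg : DifferentiableOn ℂ g upperHalfPlaneSet) (w : ℤ) :
    DifferentiableOn ℂ (slash w a b c d g) upperHalfPlaneSet := fun _ hτ =>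
  have hg' := hg.differentiableAt (isOpen_upperHalfPlaneSet.mem_nhds (moebius_im_pos hdet hτ))
  (hasDerivAt_slash w (denom_ne_zero hdet.ne' hτ.ne') hg').differentiableAt.differentiableWithinAt

end Moebius

def dlogDenom (c d : ℝ) (τ : ℂ) : ℂ :=
  1 / (2 * ↑Real.pi * I) * ((c : ℂ) / ((c : ℂ) * τ + d))

theorem hasDerivAt_dlogDenom {c d : ℝ} {τ : ℂ} (hne : (c : ℂ) * τ + d ≠ 0) :
    HasDerivAt (dlogDenom c d)
      (1 / (2 * ↑Real.pi * I) * (-c * c / ((c : ℂ) * τ + d) ^ 2)) τ := by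
  have hden := ((hasDerivAt_id τ).const_mul (c : ℂ)).add_const (d : ℂ)
  refine (((hasDerivAt_const τ (c : ℂ)).fun_div hden hne).const_mul _).congr_deriv ?_
  simp

theorem Dop_dlogDenom {c d : ℝ} {τ : ℂ} (hne : (c : ℂ) * τ + d ≠ 0) :
    Dop (dlogDenom c d) τ = -dlogDenom c d τ ^ 2 := by
  rw [Dop, (hasDerivAt_dlogDenom hne).deriv, dlogDenom]
  field_simp

theorem slash_add_two_Dop {a b c d : ℝ} (hdet : a * d - b * c = 1) {g : ℂ → ℂ} (w : ℤ)
    {τ : ℂ} (hne : (c : ℂ) * τ + d ≠ 0)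
    (hg : DifferentiableAt ℂ g (((a : ℂ) * τ + b) / ((c : ℂ) * τ + d))) :
    slash (w + 2) a b c d (Dop g) τ =
      Dop (slash w a b c d g) τ + w * dlogDenom c d τ * slash w a b c d g τ := by
  rw [Dop, (hasDerivAt_slash w hne hg).deriv, hdet]
  simp only [slash, Dop, dlogDenom, neg_add, zpow_add₀ hne, ofReal_one]
  field_simp
  ring

theorem slash_iterate_Dop_succ {f : ℂ → ℂ} (hf : DifferentiableOn ℂ f upperHalfPlaneSet)
    {a b c d : ℝ} (hdet : a * d - b * c = 1) (k : ℤ) (n : ℕ) {τ : ℂ} (hτ : 0 < τ.im) :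
    slash (k + 2 * (n + 1 : ℕ)) a b c d (Dop^[n + 1] f) τ =
      Dop (slash (k + 2 * n) a b c d (Dop^[n] f)) τ +
        (k + 2 * n) * dlogDenom c d τ * slash (k + 2 * n) a b c d (Dop^[n] f) τ := by
  have hdet_pos : 0 < a * d - b * c := hdet ▸ one_pos
  have hDf := (differentiableOn_iterate_Dop isOpen_upperHalfPlaneSet hf n).differentiableAt
    (isOpen_upperHalfPlaneSet.mem_nhds (moebius_im_pos hdet_pos hτ))
  have hweight : k + 2 * ((n + 1 : ℕ) : ℤ) = k + 2 * n + 2 := by push_cast; ring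
  rw [Function.iterate_succ_apply', hweight,
    slash_add_two_Dop hdet _ (denom_ne_zero hdet_pos.ne' hτ.ne') hDf]
  push_cast
  ring

/-- For holomorphic `f` on the upper half-plane, `γ ∈ SL₂(ℝ)`, `k ∈ ℤ`, `m ≥ 0`,
`((D^m f)|_{k+2m} γ)(τ) = Σ_{r=0}^m C(m,r)·(k+r)_{m-r}·((1/(2πi))·c/(cτ+d))^{m-r}·(D^r(f|_k γ))(τ)`. -/
theorem statement2 (f : ℂ → ℂ) (hf : DifferentiableOn ℂ f {z : ℂ | 0 < z.im})
    (a b c d : ℝ) (hdet : a * d - b * c = 1) (k : ℤ) (m : ℕ) (τ : ℂ) (hτ : 0 < τ.im) :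
    slash (k + 2 * m) a b c d (Dop^[m] f) τ =
      ∑ r ∈ Finset.range (m + 1),
        (m.choose r : ℂ) * risingC ((k : ℂ) + (r : ℂ)) (m - r) *
          ((1 / (2 * ↑Real.pi * I)) * ((c : ℂ) / ((c : ℂ) * τ + (d : ℂ)))) ^ (m - r) *
          Dop^[r] (slash k a b c d f) τ := by
  have hdet_pos : 0 < a * d - b * c := hdet ▸ one_pos
  have hne {z : ℂ} (hz : 0 < z.im) : (c : ℂ) * z + d ≠ 0 := denom_ne_zero hdet_pos.ne' hz.ne'
  have key := eq_sum_slashDopCoeff_of_recurrence isOpen_upperHalfPlaneSet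
    (fun z hz => (hasDerivAt_dlogDenom (hne hz)).differentiableAt.differentiableWithinAt)
    (fun z hz => Dop_dlogDenom (hne hz)) k
    (s := fun n => slash (k + 2 * n) a b c d (Dop^[n] f))
    (by simpa using differentiableOn_slash hdet_pos hf k)
    (fun n z hz => slash_iterate_Dop_succ hf hdet k n hz) m hτ
  simp only [Nat.cast_zero, mul_zero, add_zero, Function.iterate_zero, id_eq] at key
  exact key
end
end

section
/- Let f, g be modular forms of integer weights k, ℓ on a lattice Γ ⊂ SL₂(ℝ). Then for every n ≥ 0 the Rankin–Cohen bracket [f,g]_n^{(k,ℓ)} = Σ_{i=0}^n (-1)^i·C(n+k-1,n-i)·C(n+ℓ-1,i)·D^i(f)·D^{n-i}(g) satisfies [f|_k γ, g|_ℓ γ]_n^{(k,ℓ)} = [f,g]_n^{(k,ℓ)}|_{k+ℓ+2n} γ for all γ ∈ SL₂(ℝ); in particular [f,g]_n^{(k,ℓ)} transforms like a modular form of weight k+ℓ+2n on Γ. -/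
open Complex Finset

noncomputable section

abbrev SL2R := Matrix.SpecialLinearGroup (Fin 2) ℝ

instance : TopologicalSpace SL2R := instTopologicalSpaceSubtype

/-- The upper half-plane, as a subset of `ℂ`. -/
def UHP : Set ℂ := {z : ℂ | 0 < z.im}

/-- Möbius action of `γ ∈ SL₂(ℝ)` on the upper half-plane. -/
def mact (γ : SL2R) (τ : ℂ) : ℂ :=
  ((γ.1 0 0 : ℝ) * τ + (γ.1 0 1 : ℝ)) / ((γ.1 1 0 : ℝ) * τ + (γ.1 1 1 : ℝ))

/-- Weight `K` slash action: `(f|_K γ)(τ) = (cτ+d)^{-K} f(γτ)`. -/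
def slashK (K : ℤ) (γ : SL2R) (f : ℂ → ℂ) (τ : ℂ) : ℂ :=
  ((γ.1 1 0 : ℝ) * τ + (γ.1 1 1 : ℝ)) ^ (-K) * f (mact γ τ)

/-- A lattice in `SL₂(ℝ)`: a discrete subgroup of finite covolume. -/
def IsLattice (Γ : Subgroup SL2R) : Prop :=
  DiscreteTopology Γ ∧
    ∃ F : Set ℂ, F ⊆ UHP ∧ MeasurableSet F ∧
      (∀ τ ∈ UHP, ∃ γ ∈ Γ, mact γ τ ∈ F) ∧
      (∫⁻ z in F, ENNReal.ofReal (1 / z.im ^ 2)) < ⊤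

/-- Generalized binomial coefficient `C(a,b) = a(a-1)⋯(a-b+1)/b!` for complex `a`. -/
def genChooseC (a : ℂ) (b : ℕ) : ℂ := (∏ i ∈ Finset.range b, (a - i)) / (b.factorial : ℂ)

/-- The `n`-th Rankin–Cohen bracket of weights `k, ℓ ∈ ℤ`:
`[f,g]_n^{(k,ℓ)} = Σ_{i=0}^n (-1)^i·C(n+k-1,n-i)·C(n+ℓ-1,i)·D^i(f)·D^{n-i}(g)`. -/
def RCbracketZ (f g : ℂ → ℂ) (k l : ℤ) (n : ℕ) : ℂ → ℂ := fun τ =>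
  ∑ i ∈ Finset.range (n + 1),
    (-1 : ℂ) ^ i * genChooseC ((n : ℂ) + (k : ℂ) - 1) (n - i) *
      genChooseC ((n : ℂ) + (l : ℂ) - 1) i * Dop^[i] f τ * Dop^[n - i] g τ

/-!
Write `j = cτ + d` and `ε = c / 2πi`. Since `j' = c` and `(γτ)' = j⁻²`, induction on `m` gives
`D^m (f|_k γ) = Σ_r a_k(m, r) j^{-(k+m+r)} (D^r f)∘γ` with
`a_k(m, r) = C(m, r) (-ε)^{m-r} (k+r)(k+r+1)⋯(k+m-1)`.
Substituting this into the bracket of `f|_k γ` and `g|_ℓ γ`, the coefficient of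
`j^{-(k+ℓ+n+r+t)} D^r f · D^t g` is a sum over `i`; writing `i = r + u`, `n - i = t + v` and merging
the falling factorials, it becomes a constant times `Σ_u (-1)^u C(u+v, u)`, which vanishes unless
`u + v = 0`, i.e. `r + t = n`, where it is the bracket's own coefficient.
Invariance under `Γ` follows because `D` only sees values on the open set `UHP`.
-/

open Set
open scoped Real Nat

lemma isOpen_UHP : IsOpen UHP := isOpen_lt continuous_const Complex.continuous_im

def denomC (γ : SL2R) (τ : ℂ) : ℂ := (γ.1 1 0 : ℝ) * τ + (γ.1 1 1 : ℝ)

lemma slashK_apply (K : ℤ) (γ : SL2R) (F : ℂ → ℂ) (τ : ℂ) :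
    slashK K γ F τ = denomC γ τ ^ (-K) * F (mact γ τ) := rfl

lemma denomC_ne_zero (γ : SL2R) {τ : ℂ} (hτ : τ ∈ UHP) : denomC γ τ ≠ 0 := by
  simpa [denomC, UpperHalfPlane.denom] using
    UpperHalfPlane.denom_ne_zero_of_im (Matrix.SpecialLinearGroup.mapGL ℝ γ) (ne_of_gt hτ)

lemma mact_mem_UHP (γ : SL2R) {τ : ℂ} (hτ : τ ∈ UHP) : mact γ τ ∈ UHP := by
  have h := (γ • (⟨τ, hτ⟩ : UpperHalfPlane)).im_pos
  rwa [UpperHalfPlane.im, UpperHalfPlane.coe_specialLinearGroup_apply] at h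

lemma hasDerivAt_denomC (γ : SL2R) (τ : ℂ) : HasDerivAt (denomC γ) (γ.1 1 0 : ℝ) τ := by
  unfold denomC
  simpa using ((hasDerivAt_id τ).const_mul ((γ.1 1 0 : ℝ) : ℂ)).add_const ((γ.1 1 1 : ℝ) : ℂ)

lemma hasDerivAt_mact (γ : SL2R) {τ : ℂ} (hτ : τ ∈ UHP) :
    HasDerivAt (mact γ) (denomC γ τ ^ (-2 : ℤ)) τ := by
  have hnum : HasDerivAt (fun σ : ℂ => (γ.1 0 0 : ℝ) * σ + (γ.1 0 1 : ℝ)) (γ.1 0 0 : ℝ) τ := by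
    simpa using ((hasDerivAt_id τ).const_mul ((γ.1 0 0 : ℝ) : ℂ)).add_const ((γ.1 0 1 : ℝ) : ℂ)
  have hdet : ((γ.1 0 0 : ℝ) : ℂ) * (γ.1 1 1 : ℝ) - (γ.1 0 1 : ℝ) * (γ.1 1 0 : ℝ) = 1 := by
    have h := γ.2
    rw [Matrix.det_fin_two] at h
    exact_mod_cast h
  refine (hnum.div (hasDerivAt_denomC γ τ) (denomC_ne_zero γ hτ)).congr_deriv ?_
  have hcross : ((γ.1 0 0 : ℝ) : ℂ) * denomC γ τ -
      ((γ.1 0 0 : ℝ) * τ + (γ.1 0 1 : ℝ)) * (γ.1 1 0 : ℝ) = 1 := by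
    rw [denomC]; linear_combination hdet
  rw [hcross, zpow_neg, zpow_two, one_div, sq]

def cScaled (γ : SL2R) : ℂ := (2 * π * I)⁻¹ * (γ.1 1 0 : ℝ)

lemma Dop_eq_of_hasDerivAt {F : ℂ → ℂ} {x τ : ℂ} (h : HasDerivAt F (2 * π * I * x) τ) :
    Dop F τ = x := by
  rw [Dop, h.deriv, ← mul_assoc, inv_mul_cancel₀ two_pi_I_ne_zero, one_mul]

lemma DifferentiableAt.hasDerivAt_Dop {F : ℂ → ℂ} {τ : ℂ} (h : DifferentiableAt ℂ F τ) :
    HasDerivAt F (2 * π * I * Dop F τ) τ := by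
  rw [Dop, ← mul_assoc, mul_inv_cancel₀ two_pi_I_ne_zero, one_mul]
  exact h.hasDerivAt

lemma Dop_congr_of_eqOn {F G : ℂ → ℂ} (h : EqOn F G UHP) {τ : ℂ} (hτ : τ ∈ UHP) :
    Dop F τ = Dop G τ := by
  rw [Dop, Dop, (Filter.eventuallyEq_of_mem (isOpen_UHP.mem_nhds hτ) h).deriv_eq]

lemma eqOn_iterate_Dop {F G : ℂ → ℂ} (h : EqOn F G UHP) (m : ℕ) :
    EqOn (Dop^[m] F) (Dop^[m] G) UHP := by
  induction m with
  | zero => exact h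
  | succ m ih =>
    intro τ hτ
    simp only [Function.iterate_succ_apply']
    exact Dop_congr_of_eqOn ih hτ

lemma differentiableOn_iterate_Dop_s13 {F : ℂ → ℂ} (hF : DifferentiableOn ℂ F UHP) (m : ℕ) :
    DifferentiableOn ℂ (Dop^[m] F) UHP := by
  induction m with
  | zero => exact hF
  | succ m ih =>
    rw [Function.iterate_succ_apply']
    exact ((ih.analyticOnNhd isOpen_UHP).deriv.differentiableOn).const_mul _

lemma hasDerivAt_denomC_zpow_mul_comp_mact (γ : SL2R) (e : ℤ) {H : ℂ → ℂ} {τ : ℂ}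
    (hτ : τ ∈ UHP) (hH : DifferentiableAt ℂ H (mact γ τ)) :
    HasDerivAt (fun σ => denomC γ σ ^ e * H (mact γ σ))
      (2 * π * I * (e * cScaled γ * denomC γ τ ^ (e - 1) * H (mact γ τ)
        + denomC γ τ ^ (e - 2) * Dop H (mact γ τ))) τ := by
  have hj := denomC_ne_zero γ hτ
  have hpow := (hasDerivAt_zpow e _ (Or.inl hj)).comp τ (hasDerivAt_denomC γ τ)
  refine (hpow.mul (hH.hasDerivAt_Dop.comp τ (hasDerivAt_mact γ hτ))).congr_deriv ?_
  have he : denomC γ τ ^ e = denomC γ τ ^ (e - 1) * denomC γ τ := by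
    rw [← zpow_add_one₀ hj, sub_add_cancel]
  rw [show e - 2 = e - 1 - 1 by ring, zpow_sub_one₀ hj (e - 1), Function.comp_apply,
    Function.comp_apply, he, cScaled, zpow_neg, zpow_two]
  field_simp

-- The coefficient of `j^{-(K+m+r)} (D^r F)∘γ` in `D^m (F|_K γ)` when `c = cScaled γ`;
-- the Pochhammer factor is the rising product `(K+r)(K+r+1)⋯(K+m-1)`.
def slashDerivCoeff (K c : ℂ) (m r : ℕ) : ℂ :=
  m.choose r * (-c) ^ (m - r) * (descPochhammer ℂ (m - r)).eval (K + m - 1)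

lemma slashDerivCoeff_of_lt {K c : ℂ} {m r : ℕ} (h : m < r) : slashDerivCoeff K c m r = 0 := by
  simp [slashDerivCoeff, Nat.choose_eq_zero_of_lt h]

lemma slashDerivCoeff_zero_zero (K c : ℂ) : slashDerivCoeff K c 0 0 = 1 := by
  simp [slashDerivCoeff]

lemma slashDerivCoeff_succ_zero (K c : ℂ) (m : ℕ) :
    slashDerivCoeff K c (m + 1) 0 = -(K + m) * c * slashDerivCoeff K c m 0 := by
  simp only [slashDerivCoeff, Nat.choose_zero_right, Nat.sub_zero, descPochhammer_succ_left,
    Polynomial.eval_mul, Polynomial.eval_X, Polynomial.eval_comp, Polynomial.eval_sub,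
    Polynomial.eval_one]
  push_cast
  ring_nf

lemma slashDerivCoeff_succ_succ (K c : ℂ) (m r : ℕ) :
    slashDerivCoeff K c (m + 1) (r + 1) =
      -(K + m + (r + 1)) * c * slashDerivCoeff K c m (r + 1) + slashDerivCoeff K c m r := by
  rcases lt_trichotomy r m with hlt | rfl | hgt
  · obtain ⟨p, rfl⟩ := Nat.exists_eq_add_of_lt hlt
    have hpascal : ((r + p + 1 + 1).choose (r + 1) : ℂ) =
        (r + p + 1).choose r + (r + p + 1).choose (r + 1) := by
      exact_mod_cast Nat.choose_succ_succ (r + p + 1) r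
    have hsymm : ((r + p + 1).choose (r + 1) : ℂ) * (r + 1) = (r + p + 1).choose r * (p + 1) := by
      have h := Nat.choose_succ_right_eq (r + p + 1) r
      rw [show r + p + 1 - r = p + 1 by omega] at h
      exact_mod_cast h
    have hD₁ : (descPochhammer ℂ (p + 1)).eval (K + (r + p + 1 + 1 : ℕ) - 1) =
        (K + (r + p + 1 : ℕ)) * (descPochhammer ℂ p).eval (K + (r + p + 1 : ℕ) - 1) := by
      rw [descPochhammer_succ_left]
      simp only [Polynomial.eval_mul, Polynomial.eval_X, Polynomial.eval_comp,
        Polynomial.eval_sub, Polynomial.eval_one]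
      push_cast
      ring_nf
    have hD₂ : (descPochhammer ℂ (p + 1)).eval (K + (r + p + 1 : ℕ) - 1) =
        (descPochhammer ℂ p).eval (K + (r + p + 1 : ℕ) - 1) * (K + r) := by
      rw [descPochhammer_succ_eval]
      push_cast
      ring
    simp only [slashDerivCoeff, show r + p + 1 + 1 - (r + 1) = p + 1 by omega,
      show r + p + 1 - (r + 1) = p by omega, show r + p + 1 - r = p + 1 by omega, hD₁, hD₂,
      hpascal]
    set D := (descPochhammer ℂ p).eval (K + (r + p + 1 : ℕ) - 1)
    push_cast
    linear_combination (c * (-c) ^ p * D) * hsymm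
  · simp [slashDerivCoeff]
  · rw [slashDerivCoeff_of_lt (by omega), slashDerivCoeff_of_lt (by omega),
      slashDerivCoeff_of_lt hgt]
    ring

lemma sum_slashDerivCoeff_succ (K c : ℂ) (m : ℕ) (P : ℕ → ℂ) :
    ∑ r ∈ range (m + 2), slashDerivCoeff K c (m + 1) r * P r =
      ∑ r ∈ range (m + 1), slashDerivCoeff K c m r * (-(K + m + r) * c * P r + P (r + 1)) := by
  have hlow : ∑ r ∈ range (m + 1), slashDerivCoeff K c m r * (-(K + m + r) * c * P r) =
      ∑ r ∈ range (m + 2), slashDerivCoeff K c m r * (-(K + m + r) * c * P r) := by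
    rw [sum_range_succ _ (m + 1), slashDerivCoeff_of_lt (Nat.lt_succ_self m), zero_mul, add_zero]
  rw [sum_range_succ', slashDerivCoeff_succ_zero]
  simp only [slashDerivCoeff_succ_succ, mul_add, add_mul, sum_add_distrib, hlow]
  rw [sum_range_succ' _ (m + 1)]
  push_cast
  have hcomm : ∀ x ∈ range (m + 1),
      -(K + m + (x + 1)) * c * slashDerivCoeff K c m (x + 1) * P (x + 1) =
        slashDerivCoeff K c m (x + 1) * (-(K + m + (x + 1)) * c * P (x + 1)) :=
    fun _ _ => by ring
  rw [sum_congr rfl hcomm]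
  ring

theorem iterate_Dop_slashK (K : ℤ) (γ : SL2R) {f : ℂ → ℂ} (hf : DifferentiableOn ℂ f UHP)
    (m : ℕ) :
    EqOn (Dop^[m] (slashK K γ f))
      (fun τ => ∑ r ∈ range (m + 1), slashDerivCoeff K (cScaled γ) m r *
        (denomC γ τ ^ (-(K + m + r)) * Dop^[r] f (mact γ τ))) UHP := by
  induction m with
  | zero =>
    intro τ _
    simp [slashDerivCoeff_zero_zero, slashK_apply]
  | succ m ih =>
    intro τ hτ
    have hderiv : ∀ r ∈ range (m + 1),
        HasDerivAt (fun σ => slashDerivCoeff K (cScaled γ) m r *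
          (denomC γ σ ^ (-(K + m + r)) * Dop^[r] f (mact γ σ)))
        (slashDerivCoeff K (cScaled γ) m r * (2 * π * I *
          (((-(K + m + r) : ℤ) : ℂ) * cScaled γ * denomC γ τ ^ (-(K + m + r) - 1) *
              Dop^[r] f (mact γ τ) +
            denomC γ τ ^ (-(K + m + r) - 2) * Dop (Dop^[r] f) (mact γ τ)))) τ :=
      fun r _ => (hasDerivAt_denomC_zpow_mul_comp_mact γ _ hτ
        ((differentiableOn_iterate_Dop_s13 hf r).differentiableAt
          (isOpen_UHP.mem_nhds (mact_mem_UHP γ hτ)))).const_mul _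
    rw [Function.iterate_succ_apply', Dop_congr_of_eqOn ih hτ]
    refine Dop_eq_of_hasDerivAt ((HasDerivAt.fun_sum hderiv).congr_deriv ?_)
    beta_reduce
    rw [sum_slashDerivCoeff_succ _ _ _
      (fun r => denomC γ τ ^ (-(K + (m + 1 : ℕ) + r)) * Dop^[r] f (mact γ τ)), mul_sum]
    refine sum_congr rfl fun r _ => ?_
    rw [← Function.iterate_succ_apply' Dop]
    have h₁ : -(K + m + r) - 1 = -(K + (m + 1 : ℕ) + r) := by push_cast; ring
    have h₂ : -(K + m + r) - 2 = -(K + (m + 1 : ℕ) + (r + 1 : ℕ)) := by push_cast; ring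
    rw [h₁, h₂]
    push_cast
    ring

lemma sum_slashDerivCoeff_mul_eq_of_le (K c : ℂ) {m N : ℕ} (h : m ≤ N) (F : ℕ → ℂ) :
    ∑ r ∈ range (m + 1), slashDerivCoeff K c m r * F r =
      ∑ r ∈ range (N + 1), slashDerivCoeff K c m r * F r :=
  sum_subset (range_subset_range.mpr (by omega)) fun r _ hr => by
    rw [slashDerivCoeff_of_lt (by simp at hr; omega), zero_mul]

lemma iterate_Dop_slashK_mul (k l : ℤ) (γ : SL2R) {f g : ℂ → ℂ} (hf : DifferentiableOn ℂ f UHP)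
    (hg : DifferentiableOn ℂ g UHP) {i n : ℕ} (hi : i ≤ n) {τ : ℂ} (hτ : τ ∈ UHP) :
    Dop^[i] (slashK k γ f) τ * Dop^[n - i] (slashK l γ g) τ =
      ∑ r ∈ range (n + 1), ∑ t ∈ range (n + 1),
        slashDerivCoeff k (cScaled γ) i r * slashDerivCoeff l (cScaled γ) (n - i) t *
          (denomC γ τ ^ (-(k + l + n + r + t)) *
            (Dop^[r] f (mact γ τ) * Dop^[t] g (mact γ τ))) := by
  rw [iterate_Dop_slashK k γ hf i hτ, iterate_Dop_slashK l γ hg (n - i) hτ]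
  beta_reduce
  rw [sum_slashDerivCoeff_mul_eq_of_le _ _ hi,
    sum_slashDerivCoeff_mul_eq_of_le _ _ (Nat.sub_le n i), sum_mul_sum]
  refine sum_congr rfl fun r _ => sum_congr rfl fun t _ => ?_
  have hpow : denomC γ τ ^ (-(k + i + r)) * denomC γ τ ^ (-(l + (n - i : ℕ) + t)) =
      denomC γ τ ^ (-(k + l + n + r + t)) := by
    rw [← zpow_add₀ (denomC_ne_zero γ hτ)]
    push_cast [Nat.cast_sub hi]
    ring_nf
  rw [← hpow]
  ring

lemma genChooseC_eq_descPochhammer (a : ℂ) (b : ℕ) :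
    genChooseC a b = (descPochhammer ℂ b).eval a / b ! := by
  rw [genChooseC, descPochhammer_eval_eq_prod_range]

lemma descPochhammer_eval_mul_eval_sub {R : Type*} [CommRing R] (x : R) (p q : ℕ) :
    (descPochhammer R p).eval x * (descPochhammer R q).eval (x - p) =
      (descPochhammer R (p + q)).eval x := by
  rw [← descPochhammer_mul, Polynomial.eval_mul, Polynomial.eval_comp]
  simp

lemma sum_range_eq_sum_range_add_of_eq_zero {M : Type*} [AddCommMonoid M] (h : ℕ → M)
    {n r s : ℕ} (hn : r + s ≤ n) (hlow : ∀ i < r, h i = 0)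
    (hhigh : ∀ i ≤ n, r + s < i → h i = 0) :
    ∑ i ∈ range (n + 1), h i = ∑ u ∈ range (s + 1), h (r + u) := by
  rw [← sum_subset (s₁ := Ico r (r + s + 1)), sum_Ico_eq_sum_range,
    show r + s + 1 - r = s + 1 by omega]
  · intro i hi
    simp only [Finset.mem_Ico, Finset.mem_range] at hi ⊢
    omega
  · intro i hin hi
    simp only [Finset.mem_Ico, Finset.mem_range, not_and_or, not_le, not_lt] at hin hi
    rcases hi with hi | hi
    · exact hlow i hi
    · exact hhigh i (by omega) (by omega)

lemma rankinCohen_term_slashDerivCoeff (K L c : ℂ) {n r t s u : ℕ} (hn : n = r + t + s)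
    (hu : u ≤ s) :
    (-1) ^ (r + u) * genChooseC (n + K - 1) (n - (r + u)) * genChooseC (n + L - 1) (r + u) *
        (slashDerivCoeff K c (r + u) r * slashDerivCoeff L c (n - (r + u)) t) =
      (-1) ^ r * (-c) ^ s * (descPochhammer ℂ (t + s)).eval (n + K - 1) *
          (descPochhammer ℂ (r + s)).eval (n + L - 1) / (r ! * t ! * s !) *
        ((-1) ^ u * s.choose u) := by
  obtain ⟨v, rfl⟩ := Nat.exists_eq_add_of_le hu
  subst hn
  rw [show r + t + (u + v) - (r + u) = t + v by omega]
  simp only [slashDerivCoeff, genChooseC_eq_descPochhammer, Nat.add_sub_cancel_left]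
  have hK : (descPochhammer ℂ (t + v)).eval ((r + t + (u + v) : ℕ) + K - 1) *
      (descPochhammer ℂ u).eval (K + (r + u : ℕ) - 1) =
        (descPochhammer ℂ (t + (u + v))).eval ((r + t + (u + v) : ℕ) + K - 1) := by
    rw [show K + ((r + u : ℕ) : ℂ) - 1 = ((r + t + (u + v) : ℕ) + K - 1) - (t + v : ℕ) by
      push_cast; ring, descPochhammer_eval_mul_eval_sub, show t + v + u = t + (u + v) by ring]
  have hL : (descPochhammer ℂ (r + u)).eval ((r + t + (u + v) : ℕ) + L - 1) *
      (descPochhammer ℂ v).eval (L + (t + v : ℕ) - 1) =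
        (descPochhammer ℂ (r + (u + v))).eval ((r + t + (u + v) : ℕ) + L - 1) := by
    rw [show L + ((t + v : ℕ) : ℂ) - 1 = ((r + t + (u + v) : ℕ) + L - 1) - (r + u : ℕ) by
      push_cast; ring, descPochhammer_eval_mul_eval_sub, show r + u + v = r + (u + v) by ring]
  rw [← hK, ← hL, Nat.cast_add_choose, Nat.cast_add_choose, Nat.cast_add_choose]
  have hfact : ∀ a : ℕ, (a ! : ℂ) ≠ 0 := fun a => Nat.cast_ne_zero.mpr a.factorial_ne_zero
  field_simp [hfact]
  ring

theorem sum_rankinCohen_mul_slashDerivCoeff (K L c : ℂ) (n r t : ℕ) :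
    ∑ i ∈ range (n + 1), (-1) ^ i * genChooseC (n + K - 1) (n - i) * genChooseC (n + L - 1) i *
        (slashDerivCoeff K c i r * slashDerivCoeff L c (n - i) t) =
      if r + t = n then (-1) ^ r * genChooseC (n + K - 1) (n - r) * genChooseC (n + L - 1) r
      else 0 := by
  rcases le_or_gt (r + t) n with hle | hgt
  · obtain ⟨s, hs⟩ := Nat.exists_eq_add_of_le hle
    rw [sum_range_eq_sum_range_add_of_eq_zero _ (show r + s ≤ n by omega)
      (fun i hi => by rw [slashDerivCoeff_of_lt hi]; ring)
      (fun i hin hi => by rw [slashDerivCoeff_of_lt (show n - i < t by omega)]; ring)]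
    rw [sum_congr rfl fun u hu => rankinCohen_term_slashDerivCoeff K L c hs
      (Nat.lt_succ_iff.mp (mem_range.mp hu)), ← mul_sum]
    have halt : ∑ u ∈ range (s + 1), ((-1) ^ u * s.choose u : ℂ) = if s = 0 then 1 else 0 := by
      exact_mod_cast Int.alternating_sum_range_choose
    rw [halt]
    rcases Nat.eq_zero_or_pos s with rfl | hpos
    · rw [if_pos rfl, if_pos (by omega), show n - r = t by omega]
      simp [genChooseC_eq_descPochhammer]
      ring
    · rw [if_neg hpos.ne', if_neg (by omega), mul_zero]
  · rw [if_neg (by omega)]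
    refine sum_eq_zero fun i hin => ?_
    rw [Finset.mem_range] at hin
    rcases lt_or_ge i r with hi | hi
    · rw [slashDerivCoeff_of_lt hi]; ring
    · rw [slashDerivCoeff_of_lt (show n - i < t by omega)]; ring

theorem RCbracketZ_slashK (k l : ℤ) (γ : SL2R) {f g : ℂ → ℂ} (hf : DifferentiableOn ℂ f UHP)
    (hg : DifferentiableOn ℂ g UHP) (n : ℕ) {τ : ℂ} (hτ : τ ∈ UHP) :
    RCbracketZ (slashK k γ f) (slashK l γ g) k l n τ =
      slashK (k + l + 2 * n) γ (RCbracketZ f g k l n) τ := by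
  set A : ℕ → ℂ := genChooseC ((n : ℂ) + (k : ℂ) - 1)
  set B : ℕ → ℂ := genChooseC ((n : ℂ) + (l : ℂ) - 1)
  set a : ℤ → ℕ → ℕ → ℂ := fun K => slashDerivCoeff K (cScaled γ)
  set W : ℕ → ℕ → ℂ := fun r t => denomC γ τ ^ (-(k + l + n + r + t)) *
    (Dop^[r] f (mact γ τ) * Dop^[t] g (mact γ τ))
  calc RCbracketZ (slashK k γ f) (slashK l γ g) k l n τ
      = ∑ i ∈ range (n + 1), (-1) ^ i * A (n - i) * B i *
          ∑ r ∈ range (n + 1), ∑ t ∈ range (n + 1), a k i r * a l (n - i) t * W r t := by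
        refine sum_congr rfl fun i hi => ?_
        rw [mul_assoc,
          iterate_Dop_slashK_mul k l γ hf hg (Nat.lt_succ_iff.mp (mem_range.mp hi)) hτ]
    _ = ∑ r ∈ range (n + 1), ∑ t ∈ range (n + 1),
          (∑ i ∈ range (n + 1), (-1) ^ i * A (n - i) * B i * (a k i r * a l (n - i) t)) *
            W r t := by
        simp only [mul_sum, sum_mul]
        rw [sum_comm]
        refine sum_congr rfl fun r _ => ?_
        rw [sum_comm]
        exact sum_congr rfl fun t _ => sum_congr rfl fun i _ => by ring
    _ = ∑ r ∈ range (n + 1), ∑ t ∈ range (n + 1),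
          (if r + t = n then (-1) ^ r * A (n - r) * B r else 0) * W r t := by
        simp only [a, A, B, sum_rankinCohen_mul_slashDerivCoeff]
    _ = ∑ r ∈ range (n + 1), (-1) ^ r * A (n - r) * B r * W r (n - r) := by
        refine sum_congr rfl fun r hr => ?_
        have hrn := Nat.lt_succ_iff.mp (mem_range.mp hr)
        rw [sum_eq_single_of_mem (n - r) (mem_range.mpr (by omega))
          fun t _ ht => by rw [if_neg (by omega), zero_mul], if_pos (by omega)]
    _ = slashK (k + l + 2 * n) γ (RCbracketZ f g k l n) τ := by
        rw [slashK_apply, RCbracketZ, mul_sum]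
        refine sum_congr rfl fun r hr => ?_
        have hexp : -(k + l + n + r + (n - r : ℕ)) = -(k + l + 2 * n) := by
          push_cast [Nat.cast_sub (Nat.lt_succ_iff.mp (mem_range.mp hr))]
          ring
        simp only [W, hexp]
        ring

lemma RCbracketZ_congr {f f' g g' : ℂ → ℂ} (hf : EqOn f f' UHP) (hg : EqOn g g' UHP)
    (k l : ℤ) (n : ℕ) : EqOn (RCbracketZ f g k l n) (RCbracketZ f' g' k l n) UHP := fun τ hτ => by
  simp only [RCbracketZ, eqOn_iterate_Dop hf _ hτ, eqOn_iterate_Dop hg _ hτ]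

theorem statement13_general (Γ : Subgroup SL2R) (k l : ℤ) (f g : ℂ → ℂ)
    (hf : DifferentiableOn ℂ f UHP) (hg : DifferentiableOn ℂ g UHP)
    (hfm : ∀ γ ∈ Γ, ∀ τ ∈ UHP, slashK k γ f τ = f τ)
    (hgm : ∀ γ ∈ Γ, ∀ τ ∈ UHP, slashK l γ g τ = g τ) (n : ℕ) :
    (∀ γ : SL2R, ∀ τ ∈ UHP,
        RCbracketZ (slashK k γ f) (slashK l γ g) k l n τ =
          slashK (k + l + 2 * n) γ (RCbracketZ f g k l n) τ)
    ∧ (∀ γ ∈ Γ, ∀ τ ∈ UHP,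
        slashK (k + l + 2 * n) γ (RCbracketZ f g k l n) τ = RCbracketZ f g k l n τ) := by
  have hcov : ∀ γ : SL2R, ∀ τ ∈ UHP, RCbracketZ (slashK k γ f) (slashK l γ g) k l n τ =
      slashK (k + l + 2 * n) γ (RCbracketZ f g k l n) τ :=
    fun γ _ hτ => RCbracketZ_slashK k l γ hf hg n hτ
  refine ⟨hcov, fun γ hγ τ hτ => ?_⟩
  rw [← hcov γ τ hτ]
  exact RCbracketZ_congr (hfm γ hγ) (hgm γ hγ) k l n hτ

/-- Let `f, g` be modular forms of integer weights `k, ℓ` on a lattice `Γ ⊂ SL₂(ℝ)`.  Then for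
every `n ≥ 0` the Rankin–Cohen bracket satisfies
`[f|_k γ, g|_ℓ γ]_n = [f,g]_n |_{k+ℓ+2n} γ` for all `γ ∈ SL₂(ℝ)`; in particular
`[f,g]_n` transforms like a modular form of weight `k+ℓ+2n` on `Γ`. -/
theorem statement13 (Γ : Subgroup SL2R) (hΓ : IsLattice Γ) (k l : ℤ) (f g : ℂ → ℂ)
    (hf : DifferentiableOn ℂ f UHP) (hg : DifferentiableOn ℂ g UHP)
    (hfm : ∀ γ ∈ Γ, ∀ τ ∈ UHP, slashK k γ f τ = f τ)
    (hgm : ∀ γ ∈ Γ, ∀ τ ∈ UHP, slashK l γ g τ = g τ) (n : ℕ) :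
    (∀ γ : SL2R, ∀ τ ∈ UHP,
        RCbracketZ (slashK k γ f) (slashK l γ g) k l n τ =
          slashK (k + l + 2 * n) γ (RCbracketZ f g k l n) τ)
    ∧ (∀ γ ∈ Γ, ∀ τ ∈ UHP,
        slashK (k + l + 2 * n) γ (RCbracketZ f g k l n) τ = RCbracketZ f g k l n τ) :=
  statement13_general Γ k l f g hf hg hfm hgm n
end
end
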